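/- arXiv:1203.1152 — 6 statements merged into one kernel-verified Lean document; each statement's English description precedes it below -/
import Mathlib

section
/- Let η : ℝ × ℝ → ℝ be defined by η(x,y) = (x - y) + (x - y)². Then η satisfies η(x,y) = (x-y) + o(|x-y|) as x - y → 0, but η does not satisfy the first relation of Condition C: specifically, for x = 0, y = 2, λ = 1 one has η(y, y + λ·η(x,y)) ≠ -λ·η(x,y). -/
open Asymptotics

/-- η(x,y) = (x-y) + (x-y)² satisfies η(x,y) = (x-y) + o(x-y) as x - y → 0,
but fails the first relation of Condition C at x = 0, y = 2, λ = 1. -/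
theorem remark_2_3_is_false :
    ∃ η : ℝ → ℝ → ℝ, (∀ x y : ℝ, η x y = (x - y) + (x - y) ^ 2) ∧
      (∀ y : ℝ, (fun d : ℝ => η (y + d) y - d) =o[nhds 0] (fun d : ℝ => d)) ∧
      η 2 (2 + (1 : ℝ) * η 0 2) ≠ -(1 : ℝ) * η 0 2 := by
  refine ⟨fun x y => (x - y) + (x - y) ^ 2, fun _ _ => rfl, fun y => ?_, by norm_num⟩
  simpa only [add_sub_cancel_left, add_sub_cancel_right] using isLittleO_pow_id one_lt_two
end

section
/- Define η : ℝ × ℝ → ℝ by η(x,y) = x - y if x·y ≥ 0, η(x,y) = 2 - y if x < 0 and y > 0, and η(x,y) = -2 - y if x > 0 and y < 0. Then η satisfies Condition C: for all x, y ∈ ℝ and all λ ∈ [0,1], η(y, y + λη(x,y)) = -λη(x,y) and η(x, y + λη(x,y)) = (1-λ)η(x,y). -/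
/-!
Write `η x y = etaTarget x y - y`, where `etaTarget x y` is `x` if `0 ≤ x * y`, `2` if `x < 0 < y`
and `-2` if `y < 0 < x`. The point `z = y + λ η(x, y)` lies on the segment from `y` to
`etaTarget x y`. Both endpoints lie on the same side of `0`, hence `0 ≤ y * z` and
`η(y, z) = y - z`. Likewise `x * y` and `x * etaTarget x y` are both nonnegative or both negative,
hence so is `x * z`; thus `etaTarget x z = etaTarget x y` and
`η(x, z) = etaTarget x y - z = (1 - λ) η(x, y)`.
-/

open Set

lemma Convex.mul_add_mul_sub_mem {s : Set ℝ} (hs : Convex ℝ s) {a y w lam : ℝ}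
    (hy : a * y ∈ s) (hw : a * w ∈ s) (hlam : lam ∈ Icc (0 : ℝ) 1) :
    a * (y + lam * (w - y)) ∈ s :=
  (hs.linear_preimage (LinearMap.mulLeft ℝ a)).add_smul_sub_mem hy hw hlam

noncomputable def etaTarget (x y : ℝ) : ℝ :=
  if 0 ≤ x * y then x else if x < 0 then 2 else -2

lemma ite_eq_etaTarget_sub (x y : ℝ) :
    (if 0 ≤ x * y then x - y else if x < 0 then 2 - y else -2 - y) = etaTarget x y - y := by
  unfold etaTarget
  split_ifs <;> rfl

lemma etaTarget_of_mul_nonneg {x y : ℝ} (h : 0 ≤ x * y) : etaTarget x y = x := if_pos h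

lemma mul_etaTarget_nonneg (x y : ℝ) : 0 ≤ y * etaTarget x y := by
  unfold etaTarget
  split_ifs with hxy hx
  · linarith [mul_comm x y]
  · nlinarith
  · nlinarith

lemma etaTarget_congr {x y z : ℝ} (h : 0 ≤ x * z ↔ 0 ≤ x * y) :
    etaTarget x z = etaTarget x y := by
  simp only [etaTarget, h]

lemma mul_etaTarget_neg {x y : ℝ} (h : x * y < 0) : x * etaTarget x y < 0 := by
  unfold etaTarget
  split_ifs with hxy hx
  · exact absurd hxy h.not_ge
  · linarith
  · have hx0 : 0 < x := lt_of_le_of_ne (not_lt.mp hx) (by rintro rfl; simp at h)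
    linarith

lemma mul_add_mul_etaTarget_sub_nonneg {x y lam : ℝ} (hlam : lam ∈ Icc (0 : ℝ) 1) :
    0 ≤ y * (y + lam * (etaTarget x y - y)) :=
  (convex_Ici 0).mul_add_mul_sub_mem (mul_self_nonneg y) (mul_etaTarget_nonneg x y) hlam

lemma etaTarget_add_mul_etaTarget_sub {x y lam : ℝ} (hlam : lam ∈ Icc (0 : ℝ) 1) :
    etaTarget x (y + lam * (etaTarget x y - y)) = etaTarget x y := by
  refine etaTarget_congr ⟨fun hz => not_lt.mp fun hxy => ?_, fun hxy => ?_⟩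
  · exact hz.not_gt <|
      (convex_Iio 0).mul_add_mul_sub_mem (mem_Iio.mpr hxy) (mul_etaTarget_neg hxy) hlam
  · rw [etaTarget_of_mul_nonneg hxy]
    exact (convex_Ici 0).mul_add_mul_sub_mem hxy (mul_self_nonneg x) hlam

/-- The corrected η from Example 2.1 of Ref. 5 satisfies Condition C. -/
theorem corrected_eta_satisfies_condition_C (η : ℝ → ℝ → ℝ)
    (hη : ∀ x y : ℝ, η x y =
      if 0 ≤ x * y then x - y
      else if x < 0 then 2 - y else -2 - y) :
    ∀ x y : ℝ, ∀ lam : ℝ, lam ∈ Set.Icc (0 : ℝ) 1 →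
      η y (y + lam * η x y) = -lam * η x y ∧
      η x (y + lam * η x y) = (1 - lam) * η x y := by
  intro x y lam hlam
  have hη' : ∀ a b, η a b = etaTarget a b - b := fun a b =>
    (hη a b).trans (ite_eq_etaTarget_sub a b)
  rw [hη' x y, hη' y, hη' x, etaTarget_add_mul_etaTarget_sub hlam,
    etaTarget_of_mul_nonneg (mul_add_mul_etaTarget_sub_nonneg hlam)]
  constructor <;> ring
end

section
/- Let η : ℝⁿ × ℝⁿ → ℝⁿ satisfy Condition C. For x, y ∈ ℝⁿ and λ₁, λ₂ ∈ [0,1] with λ₂ ≤ λ₁, if η(x,y) = 0 or λ₂ = 0, then η(y + λ₁•η(x,y), y + λ₂•η(x,y)) = (λ₁ - λ₂)•η(x,y). -/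
/-!
Only the first identity of Condition C is needed. At `λ = 0` it gives `η(y, y) = 0`, which settles
the case `η(x,y) = 0`. For `λ₂ = 0`, apply it first to `(x, y, λ₁)`, giving
`η(y, y + λ₁•η(x,y)) = -λ₁•η(x,y)`, and then to `(y, y + λ₁•η(x,y), 1)`: the point
`y + λ₁•η(x,y) + η(y, y + λ₁•η(x,y))` is `y` again, so `η(y + λ₁•η(x,y), y) = λ₁•η(x,y)`.
-/

def ConditionC {E : Type*} [AddCommGroup E] [Module ℝ E] (η : E → E → E) : Prop :=
  ∀ x y, ∀ lam : ℝ, lam ∈ Set.Icc (0 : ℝ) 1 →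
    η y (y + lam • η x y) = -lam • η x y ∧ η x (y + lam • η x y) = (1 - lam) • η x y

namespace ConditionC

variable {E : Type*} [AddCommGroup E] [Module ℝ E] {η : E → E → E}

theorem apply_self_eq_zero (hC : ConditionC η) (y : E) : η y y = 0 := by
  simpa using (hC y y 0 ⟨le_rfl, zero_le_one⟩).1

theorem apply_add_smul (hC : ConditionC η) (x y : E) {lam : ℝ} (hlam : lam ∈ Set.Icc (0 : ℝ) 1) :
    η (y + lam • η x y) y = lam • η x y := by
  have hback := (hC y (y + lam • η x y) 1 ⟨zero_le_one, le_rfl⟩).1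
  rw [(hC x y lam hlam).1, neg_smul, one_smul, add_neg_cancel_right] at hback
  simpa using hback

end ConditionC

theorem conditionC_two_lambda_special_cases_general (n : ℕ)
    (η : EuclideanSpace ℝ (Fin n) → EuclideanSpace ℝ (Fin n) → EuclideanSpace ℝ (Fin n))
    (hC : ∀ x y, ∀ lam : ℝ, lam ∈ Set.Icc (0 : ℝ) 1 →
      η y (y + lam • η x y) = -lam • η x y ∧
      η x (y + lam • η x y) = (1 - lam) • η x y)
    (x y : EuclideanSpace ℝ (Fin n)) (lam₁ lam₂ : ℝ)
    (h₁ : lam₁ ∈ Set.Icc (0 : ℝ) 1)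
    (hcase : η x y = 0 ∨ lam₂ = 0) :
    η (y + lam₁ • η x y) (y + lam₂ • η x y) = (lam₁ - lam₂) • η x y := by
  have hC' : ConditionC η := hC
  rcases hcase with hzero | rfl
  · simp [hzero, hC'.apply_self_eq_zero]
  · simpa using hC'.apply_add_smul x y h₁

/-- Under Condition C, the two-parameter identity of Theorem 3.1 of Ref. 4
holds in the cases where its proof is valid: η(x,y) = 0 or λ₂ = 0. -/
theorem conditionC_two_lambda_special_cases (n : ℕ)
    (η : EuclideanSpace ℝ (Fin n) → EuclideanSpace ℝ (Fin n) → EuclideanSpace ℝ (Fin n))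
    (hC : ∀ x y, ∀ lam : ℝ, lam ∈ Set.Icc (0 : ℝ) 1 →
      η y (y + lam • η x y) = -lam • η x y ∧
      η x (y + lam • η x y) = (1 - lam) • η x y)
    (x y : EuclideanSpace ℝ (Fin n)) (lam₁ lam₂ : ℝ)
    (h₁ : lam₁ ∈ Set.Icc (0 : ℝ) 1) (h₂ : lam₂ ∈ Set.Icc (0 : ℝ) 1)
    (hle : lam₂ ≤ lam₁) (hcase : η x y = 0 ∨ lam₂ = 0) :
    η (y + lam₁ • η x y) (y + lam₂ • η x y) = (lam₁ - lam₂) • η x y :=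
  conditionC_two_lambda_special_cases_general n η hC x y lam₁ lam₂ h₁ hcase
end

section
/- Let f : ℝ → ℝ be f(x) = x²/2, r = 0, b(x,u) = 1, and η(x,u) = u⁻¹(x² - u²) + sgn(u) for u ≠ 0, η(x,u) = 0 for u = 0. Then every stationary point of f is a global minimum, but f is not B-(0,r)-invex with respect to η and b, i.e., the inequality b(x,u)·(f(x) - f(u)) ≥ f'(u)·η(x,u) fails for some x, u ∈ ℝ. -/
/-!
Stationary points of `x ↦ x²/2` are `u = 0`, a global minimum. Invexity fails on the diagonal
`x = u`: there `f x - f u = 0` whatever `b` is, so invexity forces `f'(u) η(u,u) ≤ 0`, while for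
the given `η` and `u = 1` this product is `1 · sign 1 = 1`.
-/

/-- B-(0,r)-invexity in the case `r = 0`. -/
def IsBZeroInvex (f : ℝ → ℝ) (η b : ℝ → ℝ → ℝ) : Prop :=
  ∀ x u : ℝ, b x u * (f x - f u) ≥ deriv f u * η x u

theorem IsBZeroInvex.deriv_mul_self_nonpos {f : ℝ → ℝ} {η b : ℝ → ℝ → ℝ}
    (h : IsBZeroInvex f η b) (u : ℝ) : deriv f u * η u u ≤ 0 := by
  simpa using h u u

theorem deriv_sq_div_two (u : ℝ) : deriv (fun x : ℝ => x ^ 2 / 2) u = u := by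
  simp [((hasDerivAt_pow 2 u).div_const 2).deriv]

theorem not_B_zero_r_invex_general (f : ℝ → ℝ) (b : ℝ → ℝ → ℝ) (η : ℝ → ℝ → ℝ)
    (hf : ∀ x : ℝ, f x = x ^ 2 / 2)
    (hη : ∀ x u : ℝ, u ≠ 0 → η x u = u⁻¹ * (x ^ 2 - u ^ 2) + Real.sign u) :
    (∀ u : ℝ, deriv f u = 0 → ∀ x : ℝ, f u ≤ f x) ∧
    ¬ (∀ x u : ℝ, b x u * (f x - f u) ≥ deriv f u * η x u) := by
  obtain rfl : f = fun x : ℝ => x ^ 2 / 2 := funext hf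
  refine ⟨fun u hu x => ?_, fun hinvex => ?_⟩
  · obtain rfl : u = 0 := by rwa [deriv_sq_div_two] at hu
    linarith [sq_nonneg x]
  · have h1 := IsBZeroInvex.deriv_mul_self_nonpos (b := b) hinvex 1
    rw [deriv_sq_div_two, hη 1 1 one_ne_zero, Real.sign_one] at h1
    norm_num at h1

/-- For f(x) = x²/2, b ≡ 1, r = 0 and the particular η, every stationary point
of f is a global minimum but f is not B-(0,r)-invex w.r.t. η and b. -/
theorem not_B_zero_r_invex (f : ℝ → ℝ) (b : ℝ → ℝ → ℝ) (η : ℝ → ℝ → ℝ)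
    (hf : ∀ x : ℝ, f x = x ^ 2 / 2) (hb : ∀ x u : ℝ, b x u = 1)
    (hη : ∀ x u : ℝ, u ≠ 0 → η x u = u⁻¹ * (x ^ 2 - u ^ 2) + Real.sign u)
    (hη0 : ∀ x : ℝ, η x 0 = 0) :
    (∀ u : ℝ, deriv f u = 0 → ∀ x : ℝ, f u ≤ f x) ∧
    ¬ (∀ x u : ℝ, b x u * (f x - f u) ≥ deriv f u * η x u) :=
  not_B_zero_r_invex_general f b η hf hη
end

section
/- Let K ⊆ ℝⁿ be invex with respect to η (i.e., u + λ•η(x,u) ∈ K for all x, u ∈ K, λ ∈ [0,1]), and let f : ℝⁿ → ℝ be differentiable. If f is preinvex with respect to η on K, i.e., f(u + λ•η(x,u)) ≤ λ·f(x) + (1-λ)·f(u) for all x, u ∈ K and λ ∈ [0,1], then f is invex with respect to η on K: f(x) - f(u) ≥ ⟨∇f(u), η(x,u)⟩ for all x, u ∈ K. -/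
/-! Preinvexity bounds every right difference quotient of `t ↦ f (u + t • η x u)` at `0` by
`f x - f u`; as `t → 0⁺` these quotients tend to the directional derivative `⟪∇f u, η x u⟫`. -/

open Filter Set Topology RealInnerProductSpace

theorem le_of_hasDerivWithinAt_Ioi_of_slope_le {g : ℝ → ℝ} {g' c x : ℝ}
    (hg : HasDerivWithinAt g g' (Ioi x) x) (hslope : ∀ᶠ t in 𝓝[>] x, slope g x t ≤ c) :
    g' ≤ c :=
  le_of_tendsto ((hasDerivWithinAt_iff_tendsto_slope' self_notMem_Ioi).mp hg) hslope

theorem fderiv_apply_le_of_le_chord {E : Type*} [NormedAddCommGroup E] [NormedSpace ℝ E]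
    {f : E → ℝ} {u v : E} {a : ℝ} (hf : DifferentiableAt ℝ f u)
    (hchord : ∀ t ∈ Ioc (0 : ℝ) 1, f (u + t • v) ≤ t * a + (1 - t) * f u) :
    fderiv ℝ f u v ≤ a - f u := by
  have hline : HasDerivAt (fun t : ℝ => u + t • v) v 0 := by
    simpa using ((hasDerivAt_id (0 : ℝ)).smul_const v).const_add u
  have hderiv : HasDerivAt (fun t : ℝ => f (u + t • v)) (fderiv ℝ f u v) 0 :=
    hf.hasFDerivAt.comp_hasDerivAt_of_eq 0 hline (by simp)
  refine le_of_hasDerivWithinAt_Ioi_of_slope_le hderiv.hasDerivWithinAt ?_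
  filter_upwards [Ioc_mem_nhdsGT zero_lt_one] with t ht
  rw [slope_def_field, sub_zero, zero_smul, add_zero, div_le_iff₀ ht.1]
  linarith [hchord t ht]

theorem preinvex_implies_invex_general (n : ℕ) (K : Set (EuclideanSpace ℝ (Fin n)))
    (η : EuclideanSpace ℝ (Fin n) → EuclideanSpace ℝ (Fin n) → EuclideanSpace ℝ (Fin n))
    (f : EuclideanSpace ℝ (Fin n) → ℝ) (hf : Differentiable ℝ f)
    (hpre : ∀ x ∈ K, ∀ u ∈ K, ∀ lam : ℝ, lam ∈ Set.Icc (0 : ℝ) 1 →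
      f (u + lam • η x u) ≤ lam * f x + (1 - lam) * f u) :
    ∀ x ∈ K, ∀ u ∈ K, f x - f u ≥ ⟪gradient f u, η x u⟫ := by
  intro x hx u hu
  rw [ge_iff_le, inner_gradient_left]
  exact fderiv_apply_le_of_le_chord (hf u) fun t ht => hpre x hx u hu t (Ioc_subset_Icc_self ht)

/-- Pini's result: a differentiable preinvex function on an invex set is invex
with respect to the same η. -/
theorem preinvex_implies_invex (n : ℕ) (K : Set (EuclideanSpace ℝ (Fin n)))
    (η : EuclideanSpace ℝ (Fin n) → EuclideanSpace ℝ (Fin n) → EuclideanSpace ℝ (Fin n))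
    (hK : ∀ x ∈ K, ∀ u ∈ K, ∀ lam : ℝ, lam ∈ Set.Icc (0 : ℝ) 1 →
      u + lam • η x u ∈ K)
    (f : EuclideanSpace ℝ (Fin n) → ℝ) (hf : Differentiable ℝ f)
    (hpre : ∀ x ∈ K, ∀ u ∈ K, ∀ lam : ℝ, lam ∈ Set.Icc (0 : ℝ) 1 →
      f (u + lam • η x u) ≤ lam * f x + (1 - lam) * f u) :
    ∀ x ∈ K, ∀ u ∈ K, f x - f u ≥ ⟪gradient f u, η x u⟫ :=
  preinvex_implies_invex_general n K η f hf hpre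
end

section
/- Let K be a nonempty set, α : K × K → ℝ, and η : K × K → ℝⁿ with K ⊆ ℝⁿ. If α satisfies α(u, u + t·α(v,u)•η(v,u)) = t·α(v,u) for all u, v ∈ K and all t ∈ [0,1], then α(u,u) = 0 for every u ∈ K. Consequently, there exists no α : K × K → ℝ \ {0} satisfying this condition; the hypotheses of Theorems 6.1–6.4 of Ref. 8 are never satisfiable. -/
/-- The condition of Theorems 6.1–6.4 of Ref. 8 forces α(u,u) = 0 on K, so no
nowhere-zero α can satisfy it: those theorems are vacuous. -/
theorem ref8_condition_forces_alpha_diag_zero (n : ℕ)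
    (K : Set (EuclideanSpace ℝ (Fin n))) (hK : K.Nonempty)
    (α : EuclideanSpace ℝ (Fin n) → EuclideanSpace ℝ (Fin n) → ℝ)
    (η : EuclideanSpace ℝ (Fin n) → EuclideanSpace ℝ (Fin n) → EuclideanSpace ℝ (Fin n))
    (hcond : ∀ u ∈ K, ∀ v ∈ K, ∀ t : ℝ, t ∈ Set.Icc (0 : ℝ) 1 →
      α u (u + (t * α v u) • η v u) = t * α v u) :
    (∀ u ∈ K, α u u = 0) ∧ ¬ (∀ u ∈ K, ∀ v ∈ K, α u v ≠ 0) := by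
  have hdiag : ∀ u ∈ K, α u u = 0 := fun u hu => by
    simpa using hcond u hu u hu 0 (Set.left_mem_Icc.2 zero_le_one)
  obtain ⟨u, hu⟩ := hK
  exact ⟨hdiag, fun hne => hne u hu u hu (hdiag u hu)⟩
end
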